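/- arXiv:2511.16868 — 4 statements merged into one kernel-verified Lean document; each statement's English description precedes it below -/
import Mathlib

section
/- Let 𝐗 and 𝐘 be distributions of mm-spaces, let X₁ and X₂ be two embeddings of 𝐗 (with embedding functions (ψ_{X_{1,i}})_{i∈[k_X]} and (ψ_{X_{2,i}})_{i∈[k_X]}), and let Y₁ and Y₂ be two embeddings of 𝐘 (with embedding functions (ψ_{Y_{1,j}})_{j∈[k_Y]} and (ψ_{Y_{2,j}})_{j∈[k_Y]}). Then for every p ∈ [1,∞), GW_{Γ*_p,p}(X₁,Y₁) = GW_{Γ*_p,p}(X₂,Y₂). In particular, the joint Gromov–Wasserstein objective JGW_p(𝐗,𝐘) is well defined, independently of the chosen embeddings and embedding functions. -/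
/-- A metric measure space: a compact metric space equipped with a Borel
probability measure of full support. -/
structure MMSpace where
  carrier : Type
  [met : MetricSpace carrier]
  [cpt : CompactSpace carrier]
  [mble : MeasurableSpace carrier]
  [borel : BorelSpace carrier]
  μ : MeasureTheory.Measure carrier
  [prob : MeasureTheory.IsProbabilityMeasure μ]
  fullSupp : μ.IsOpenPosMeasure

attribute [instance] MMSpace.met MMSpace.cpt MMSpace.mble MMSpace.borel MMSpace.prob

/-- A distribution of mm-spaces: finitely many mm-spaces (clusters) with
strictly positive weights summing to one. -/
structure MMDist where
  k : ℕ
  space : Fin k → MMSpace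
  s : Fin k → ℝ
  s_pos : ∀ i, 0 < s i
  s_sum : ∑ i, s i = 1

/-- An embedding of a distribution of mm-spaces: an mm-space together with
isometric embedding functions whose weighted pushforwards recover the measure,
with pairwise disjoint images covering the space. -/
structure MMEmbedding (D : MMDist) where
  tot : MMSpace
  ψ : ∀ i, (D.space i).carrier → tot.carrier
  isom : ∀ i, Isometry (ψ i)
  pushforward :
    ∑ i, ENNReal.ofReal (D.s i) • MeasureTheory.Measure.map (ψ i) (D.space i).μ = tot.μ
  disj : ∀ i j, i ≠ j → Disjoint (Set.range (ψ i)) (Set.range (ψ j))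
  cover : ⋃ i, Set.range (ψ i) = Set.univ

open MeasureTheory

/-- The set of couplings `M(μX, μY)`: Borel probability measures on the product
with the prescribed marginals. -/
def Couplings {X Y : Type} [MeasurableSpace X] [MeasurableSpace Y]
    (μX : Measure X) (μY : Measure Y) : Set (Measure (X × Y)) :=
  {μ | IsProbabilityMeasure μ ∧ μ.map Prod.fst = μX ∧ μ.map Prod.snd = μY}

/-- The Gromov-Wasserstein objective `GW_{Γ,p}` for a loss `Γ`. -/
noncomputable def GWobj {X Y : Type} [MeasurableSpace X] [MeasurableSpace Y]
    (μX : Measure X) (μY : Measure Y) (Γ : X → Y → X → Y → ℝ) (p : ℝ) : ℝ :=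
  sInf ((fun μ : Measure (X × Y) =>
      (1 / 2) * (∫ w : (X × Y) × (X × Y), Γ w.1.1 w.1.2 w.2.1 w.2.2 ∂(μ.prod μ)) ^ (1 / p))
    '' Couplings μX μY)

open scoped Classical in
/-- The loss `Γ*_p` associated to embeddings of two distributions of mm-spaces. -/
noncomputable def GammaStar {DX DY : MMDist} (EX : MMEmbedding DX) (EY : MMEmbedding DY)
    (p : ℝ) (x : EX.tot.carrier) (y : EY.tot.carrier)
    (x' : EX.tot.carrier) (y' : EY.tot.carrier) : ℝ :=
  if (∃ i, x ∈ Set.range (EX.ψ i) ∧ x' ∈ Set.range (EX.ψ i)) ∧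
      (∃ j, y ∈ Set.range (EY.ψ j) ∧ y' ∈ Set.range (EY.ψ j)) then
    |dist x x' - dist y y'| ^ p
  else 0

/-- The joint Gromov-Wasserstein objective computed with given embeddings. -/
noncomputable def JGWwith {DX DY : MMDist} (EX : MMEmbedding DX) (EY : MMEmbedding DY)
    (p : ℝ) : ℝ :=
  GWobj EX.tot.μ EY.tot.μ (GammaStar EX EY p) p

section Transfer

variable {D : MMDist}

lemma MMEmbedding.exists_rep (E : MMEmbedding D) (x : E.tot.carrier) :
    ∃ i z, E.ψ i z = x := by
  have hx : x ∈ ⋃ i, Set.range (E.ψ i) := by rw [E.cover]; trivial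
  simpa [Set.mem_iUnion] using hx

/-- The canonical index of the cluster containing `x`. -/
noncomputable def MMEmbedding.repIdx (E : MMEmbedding D) (x : E.tot.carrier) : Fin D.k :=
  (E.exists_rep x).choose

/-- The canonical representative of `x` in its cluster. -/
noncomputable def MMEmbedding.repPt (E : MMEmbedding D) (x : E.tot.carrier) :
    (D.space (E.repIdx x)).carrier :=
  (E.exists_rep x).choose_spec.choose

lemma MMEmbedding.rep_spec (E : MMEmbedding D) (x : E.tot.carrier) :
    E.ψ (E.repIdx x) (E.repPt x) = x :=
  (E.exists_rep x).choose_spec.choose_spec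

/-- The canonical identification between two embeddings of the same distribution. -/
noncomputable def transfer (E1 E2 : MMEmbedding D) (x : E1.tot.carrier) : E2.tot.carrier :=
  E2.ψ (E1.repIdx x) (E1.repPt x)

lemma repIdx_eq (E : MMEmbedding D) {i : Fin D.k} {z : (D.space i).carrier}
    {x : E.tot.carrier} (hx : E.ψ i z = x) : E.repIdx x = i := by
  by_contra h
  exact Set.disjoint_left.mp (E.disj _ i h) ⟨E.repPt x, E.rep_spec x⟩ ⟨z, hx⟩

lemma psi_congr (E1 E2 : MMEmbedding D) {a b : Fin D.k} {u : (D.space a).carrier}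
    {v : (D.space b).carrier} (h : E1.ψ a u = E1.ψ b v) : E2.ψ a u = E2.ψ b v := by
  have hab : a = b := by
    by_contra hne
    exact Set.disjoint_left.mp (E1.disj a b hne) ⟨u, rfl⟩ ⟨v, h.symm⟩
  subst hab
  rw [(E1.isom a).injective h]

lemma transfer_psi (E1 E2 : MMEmbedding D) (i : Fin D.k) (z : (D.space i).carrier) :
    transfer E1 E2 (E1.ψ i z) = E2.ψ i z :=
  psi_congr E1 E2 (E1.rep_spec (E1.ψ i z))

lemma transfer_transfer (E1 E2 : MMEmbedding D) (x : E1.tot.carrier) :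
    transfer E2 E1 (transfer E1 E2 x) = x := by
  obtain ⟨i, z, rfl⟩ := E1.exists_rep x
  rw [transfer_psi, transfer_psi]

lemma mmClosedEmbedding (E : MMEmbedding D) (i : Fin D.k) :
    Topology.IsClosedEmbedding (E.ψ i) :=
  (E.isom i).isClosedEmbedding

lemma measurable_psi (E : MMEmbedding D) (i : Fin D.k) : Measurable (E.ψ i) :=
  (mmClosedEmbedding E i).measurableEmbedding.measurable

lemma transfer_preimage (E1 E2 : MMEmbedding D) (A : Set E2.tot.carrier) :
    transfer E1 E2 ⁻¹' A = ⋃ i, E1.ψ i '' (E2.ψ i ⁻¹' A) := by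
  ext x
  simp only [Set.mem_preimage, Set.mem_iUnion, Set.mem_image]
  constructor
  · intro hx
    obtain ⟨i, z, rfl⟩ := E1.exists_rep x
    exact ⟨i, z, by rwa [transfer_psi] at hx, rfl⟩
  · rintro ⟨i, z, hz, rfl⟩
    rwa [transfer_psi]

lemma measurable_transfer (E1 E2 : MMEmbedding D) : Measurable (transfer E1 E2) := by
  intro A hA
  rw [transfer_preimage]
  exact MeasurableSet.iUnion fun i =>
    (mmClosedEmbedding E1 i).measurableEmbedding.measurableSet_image.2
      (measurable_psi E2 i hA)

/-- The canonical identification as a measurable equivalence. -/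
noncomputable def transferEquiv (E1 E2 : MMEmbedding D) :
    E1.tot.carrier ≃ᵐ E2.tot.carrier where
  toFun := transfer E1 E2
  invFun := transfer E2 E1
  left_inv := transfer_transfer E1 E2
  right_inv := transfer_transfer E2 E1
  measurable_toFun := measurable_transfer E1 E2
  measurable_invFun := measurable_transfer E2 E1

lemma mem_range_transfer (E1 E2 : MMEmbedding D) (i : Fin D.k) (x : E1.tot.carrier) :
    transfer E1 E2 x ∈ Set.range (E2.ψ i) ↔ x ∈ Set.range (E1.ψ i) := by
  constructor
  · rintro ⟨z, hz⟩
    obtain ⟨i', z', rfl⟩ := E1.exists_rep x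
    rw [transfer_psi] at hz
    by_cases h : i' = i
    · subst h; exact ⟨z', rfl⟩
    · exact ((Set.disjoint_left.mp (E2.disj i i' (Ne.symm h)) ⟨z, hz⟩) ⟨z', rfl⟩).elim
  · rintro ⟨z, rfl⟩
    rw [transfer_psi]
    exact ⟨z, rfl⟩

lemma dist_transfer (E1 E2 : MMEmbedding D) {i : Fin D.k} {x x' : E1.tot.carrier}
    (hx : x ∈ Set.range (E1.ψ i)) (hx' : x' ∈ Set.range (E1.ψ i)) :
    dist (transfer E1 E2 x) (transfer E1 E2 x') = dist x x' := by
  obtain ⟨z, rfl⟩ := hx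
  obtain ⟨z', rfl⟩ := hx'
  rw [transfer_psi, transfer_psi, (E2.isom i).dist_eq, (E1.isom i).dist_eq]

lemma map_sum_smul {α β : Type} [MeasurableSpace α] [MeasurableSpace β]
    {n : ℕ} (μs : Fin n → Measure α) (c : Fin n → ENNReal) {f : α → β}
    (hf : Measurable f) :
    (∑ i, c i • μs i).map f = ∑ i, c i • (μs i).map f := by
  ext s hs
  simp [Measure.map_apply hf hs, Measure.finset_sum_apply, Measure.smul_apply]

lemma map_transfer (E1 E2 : MMEmbedding D) :
    E1.tot.μ.map (transfer E1 E2) = E2.tot.μ := by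
  rw [← E1.pushforward, ← E2.pushforward,
    map_sum_smul _ _ (measurable_transfer E1 E2)]
  congr 1
  ext i : 1
  congr 1
  rw [Measure.map_map (measurable_transfer E1 E2) (measurable_psi E1 i)]
  congr 1
  funext z
  exact transfer_psi E1 E2 i z

end Transfer

open scoped Classical in
lemma gammaStar_transfer {DX DY : MMDist} (EX1 EX2 : MMEmbedding DX)
    (EY1 EY2 : MMEmbedding DY) (p : ℝ)
    (x x' : EX1.tot.carrier) (y y' : EY1.tot.carrier) :
    GammaStar EX2 EY2 p (transfer EX1 EX2 x) (transfer EY1 EY2 y)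
      (transfer EX1 EX2 x') (transfer EY1 EY2 y') = GammaStar EX1 EY1 p x y x' y' := by
  unfold GammaStar
  have hcx : (∃ i, transfer EX1 EX2 x ∈ Set.range (EX2.ψ i) ∧
      transfer EX1 EX2 x' ∈ Set.range (EX2.ψ i)) ↔
      (∃ i, x ∈ Set.range (EX1.ψ i) ∧ x' ∈ Set.range (EX1.ψ i)) := by
    simp only [mem_range_transfer]
  have hcy : (∃ j, transfer EY1 EY2 y ∈ Set.range (EY2.ψ j) ∧
      transfer EY1 EY2 y' ∈ Set.range (EY2.ψ j)) ↔
      (∃ j, y ∈ Set.range (EY1.ψ j) ∧ y' ∈ Set.range (EY1.ψ j)) := by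
    simp only [mem_range_transfer]
  by_cases h : (∃ i, x ∈ Set.range (EX1.ψ i) ∧ x' ∈ Set.range (EX1.ψ i)) ∧
      (∃ j, y ∈ Set.range (EY1.ψ j) ∧ y' ∈ Set.range (EY1.ψ j))
  · rw [if_pos h, if_pos (by rw [hcx, hcy]; exact h)]
    obtain ⟨⟨i, hx, hx'⟩, ⟨j, hy, hy'⟩⟩ := h
    rw [dist_transfer EX1 EX2 hx hx', dist_transfer EY1 EY2 hy hy']
  · rw [if_neg h, if_neg (by rw [hcx, hcy]; exact h)]

/-- Transferring a coupling along the canonical identifications. -/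
lemma gw_le_transfer {DX DY : MMDist} (EX1 EX2 : MMEmbedding DX)
    (EY1 EY2 : MMEmbedding DY) (p : ℝ) :
    ((fun μ : Measure (EX1.tot.carrier × EY1.tot.carrier) =>
        (1 / 2) * (∫ w : (EX1.tot.carrier × EY1.tot.carrier) ×
            (EX1.tot.carrier × EY1.tot.carrier),
          GammaStar EX1 EY1 p w.1.1 w.1.2 w.2.1 w.2.2 ∂(μ.prod μ)) ^ (1 / p))
      '' Couplings EX1.tot.μ EY1.tot.μ) ⊆
    ((fun μ : Measure (EX2.tot.carrier × EY2.tot.carrier) =>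
        (1 / 2) * (∫ w : (EX2.tot.carrier × EY2.tot.carrier) ×
            (EX2.tot.carrier × EY2.tot.carrier),
          GammaStar EX2 EY2 p w.1.1 w.1.2 w.2.1 w.2.2 ∂(μ.prod μ)) ^ (1 / p))
      '' Couplings EX2.tot.μ EY2.tot.μ) := by
  rintro v ⟨μ, ⟨hprob, hfst, hsnd⟩, rfl⟩
  haveI := hprob
  set e : EX1.tot.carrier × EY1.tot.carrier ≃ᵐ EX2.tot.carrier × EY2.tot.carrier :=
    (transferEquiv EX1 EX2).prodCongr (transferEquiv EY1 EY2) with he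
  have hecoe : ⇑e = Prod.map (transfer EX1 EX2) (transfer EY1 EY2) := rfl
  refine ⟨μ.map e, ⟨?_, ?_, ?_⟩, ?_⟩
  · exact Measure.isProbabilityMeasure_map e.measurable.aemeasurable
  · rw [Measure.map_map measurable_fst e.measurable]
    have : (Prod.fst ∘ ⇑e : EX1.tot.carrier × EY1.tot.carrier → EX2.tot.carrier)
        = transfer EX1 EX2 ∘ Prod.fst := rfl
    rw [this, ← Measure.map_map (measurable_transfer EX1 EX2) measurable_fst, hfst,
      map_transfer]
  · rw [Measure.map_map measurable_snd e.measurable]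
    have : (Prod.snd ∘ ⇑e : EX1.tot.carrier × EY1.tot.carrier → EY2.tot.carrier)
        = transfer EY1 EY2 ∘ Prod.snd := rfl
    rw [this, ← Measure.map_map (measurable_transfer EY1 EY2) measurable_snd, hsnd,
      map_transfer]
  · dsimp only
    have hprod : (μ.map e).prod (μ.map e) = (μ.prod μ).map (e.prodCongr e) := by
      rw [Measure.map_prod_map _ _ e.measurable e.measurable]
      rfl
    rw [hprod, MeasureTheory.integral_map_equiv]
    congr 1
    congr 1
    refine integral_congr_ae (Filter.Eventually.of_forall fun w => ?_)
    exact gammaStar_transfer EX1 EX2 EY1 EY2 p w.1.1 w.2.1 w.1.2 w.2.2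

/-- The joint Gromov-Wasserstein objective is well defined:
its value does not depend on the chosen embeddings (nor on their embedding
functions). -/
theorem jgw_well_defined (DX DY : MMDist)
    (EX1 EX2 : MMEmbedding DX) (EY1 EY2 : MMEmbedding DY)
    (p : ℝ) (hp : 1 ≤ p) :
    GWobj EX1.tot.μ EY1.tot.μ (GammaStar EX1 EY1 p) p =
      GWobj EX2.tot.μ EY2.tot.μ (GammaStar EX2 EY2 p) p := by
  unfold GWobj
  congr 1
  exact le_antisymm (gw_le_transfer EX1 EX2 EY1 EY2 p)
    (gw_le_transfer EX2 EX1 EY2 EY1 p)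
end

section
/- Let 𝐗 and 𝐘 be distributions of mm-spaces and p ∈ [1,∞). If 𝐗 and 𝐘 are partially isomorphic, then JGW_p(𝐗,𝐘) = 0; more precisely, for any embeddings X of 𝐗 and Y of 𝐘 there exists a coupling μ* ∈ M(μ_X, μ_Y) with ∬_{(X×Y)×(X×Y)} Γ*_p(x,y,x',y') dμ*(x,y) dμ*(x',y') = 0. -/
open MeasureTheory

/-- A witness of partial isomorphism between two distributions of mm-spaces:
mm-spaces `Z i j` with nonnegative weights and isometric maps into the clusters
`X i` and `Y j`, whose weighted pushforwards recover the weighted cluster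
measures. -/
structure PartialIsomWitness (DX DY : MMDist) where
  Z : Fin DX.k → Fin DY.k → MMSpace
  sZ : Fin DX.k → Fin DY.k → ℝ
  sZ_nonneg : ∀ i j, 0 ≤ sZ i j
  ψX : ∀ i j, (Z i j).carrier → (DX.space i).carrier
  ψY : ∀ i j, (Z i j).carrier → (DY.space j).carrier
  isomX : ∀ i j, Isometry (ψX i j)
  isomY : ∀ i j, Isometry (ψY i j)
  margX : ∀ i, ∑ j, ENNReal.ofReal (sZ i j) • Measure.map (ψX i j) (Z i j).μ =
    ENNReal.ofReal (DX.s i) • (DX.space i).μ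
  margY : ∀ j, ∑ i, ENNReal.ofReal (sZ i j) • Measure.map (ψY i j) (Z i j).μ =
    ENNReal.ofReal (DY.s j) • (DY.space j).μ

/-- Two distributions of mm-spaces are partially isomorphic if such a witness
exists. -/
def PartiallyIsomorphic (DX DY : MMDist) : Prop := Nonempty (PartialIsomWitness DX DY)

open MeasureTheory in
lemma map_finset_sum' {α β ι : Type*} [MeasurableSpace α] [MeasurableSpace β] {f : α → β}
    (hf : Measurable f) (s : Finset ι) (μ : ι → Measure α) :
    (∑ i ∈ s, μ i).map f = ∑ i ∈ s, (μ i).map f := by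
  simp_rw [← Measure.mapₗ_apply_of_measurable hf]
  exact map_sum (Measure.mapₗ f) μ s

/-- If `𝐗` and `𝐘` are partially isomorphic then
`JGW_p(𝐗,𝐘) = 0`; more precisely, for any embeddings there is a coupling
`μ* ∈ M(μ_X, μ_Y)` whose double integral of `Γ*_p` vanishes. -/

theorem partiallyIsomorphic_jgw_eq_zero (DX DY : MMDist) (p : ℝ) (hp : 1 ≤ p)
    (h : PartiallyIsomorphic DX DY) :
    ∀ (EX : MMEmbedding DX) (EY : MMEmbedding DY),
      JGWwith EX EY p = 0 ∧
      ∃ μstar ∈ Couplings EX.tot.μ EY.tot.μ,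
        (∫ w : (EX.tot.carrier × EY.tot.carrier) ×
            (EX.tot.carrier × EY.tot.carrier),
          GammaStar EX EY p w.1.1 w.1.2 w.2.1 w.2.2 ∂(μstar.prod μstar)) = 0 := by
  intro EX EY
  obtain ⟨W⟩ := h
  have hp0 : p ≠ 0 := by linarith
  set g : ∀ i j, (W.Z i j).carrier → EX.tot.carrier × EY.tot.carrier :=
    fun i j z => (EX.ψ i (W.ψX i j z), EY.ψ j (W.ψY i j z)) with hgdef
  have hg : ∀ i j, Measurable (g i j) := fun i j =>
    (((EX.isom i).continuous.comp (W.isomX i j).continuous).measurable).prodMk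
      (((EY.isom j).continuous.comp (W.isomY i j).continuous).measurable)
  have hgc : ∀ i j, Continuous (g i j) := fun i j =>
    (((EX.isom i).continuous.comp (W.isomX i j).continuous)).prodMk
      (((EY.isom j).continuous.comp (W.isomY i j).continuous))
  set μstar : Measure (EX.tot.carrier × EY.tot.carrier) :=
    ∑ i, ∑ j, ENNReal.ofReal (W.sZ i j) • ((W.Z i j).μ.map (g i j)) with hμdef
  -- row sums of the weights
  have hrow : ∀ i, ∑ j, ENNReal.ofReal (W.sZ i j) = ENNReal.ofReal (DX.s i) := by
    intro i
    have := congrArg (fun m : Measure (DX.space i).carrier => m Set.univ) (W.margX i)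
    simpa [Measure.finset_sum_apply, Measure.smul_apply, smul_eq_mul,
      Measure.map_apply ((W.isomX i _).continuous.measurable) MeasurableSet.univ] using this
  have hμstar_univ : μstar Set.univ = 1 := by
    have h1 : μstar Set.univ = ∑ i, ∑ j, ENNReal.ofReal (W.sZ i j) := by
      simp [hμdef, Measure.finset_sum_apply, Measure.smul_apply, smul_eq_mul,
        Measure.map_apply (hg _ _) MeasurableSet.univ]
    rw [h1]
    simp_rw [hrow]
    rw [← ENNReal.ofReal_sum_of_nonneg (fun i _ => (DX.s_pos i).le), DX.s_sum,
      ENNReal.ofReal_one]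
  haveI hprob : IsProbabilityMeasure μstar := ⟨hμstar_univ⟩
  -- first marginal
  have hfst : μstar.map Prod.fst = EX.tot.μ := by
    rw [hμdef, map_finset_sum' measurable_fst]
    calc ∑ i, (∑ j, ENNReal.ofReal (W.sZ i j) • ((W.Z i j).μ.map (g i j))).map Prod.fst
        = ∑ i, ENNReal.ofReal (DX.s i) • (DX.space i).μ.map (EX.ψ i) := by
          refine Finset.sum_congr rfl fun i _ => ?_
          rw [map_finset_sum' measurable_fst]
          have hterm : ∀ j,
              (ENNReal.ofReal (W.sZ i j) • ((W.Z i j).μ.map (g i j))).map Prod.fst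
              = (ENNReal.ofReal (W.sZ i j) • ((W.Z i j).μ.map (W.ψX i j))).map (EX.ψ i) := by
            intro j
            rw [Measure.map_smul, Measure.map_smul,
              Measure.map_map measurable_fst (hg i j),
              Measure.map_map ((EX.isom i).continuous.measurable)
                ((W.isomX i j).continuous.measurable)]
            rfl
          simp_rw [hterm]
          rw [← map_finset_sum' ((EX.isom i).continuous.measurable), W.margX i,
            Measure.map_smul]
      _ = EX.tot.μ := EX.pushforward
  -- second marginal
  have hsnd : μstar.map Prod.snd = EY.tot.μ := by
    rw [hμdef, Finset.sum_comm, map_finset_sum' measurable_snd]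
    calc ∑ j, (∑ i, ENNReal.ofReal (W.sZ i j) • ((W.Z i j).μ.map (g i j))).map Prod.snd
        = ∑ j, ENNReal.ofReal (DY.s j) • (DY.space j).μ.map (EY.ψ j) := by
          refine Finset.sum_congr rfl fun j _ => ?_
          rw [map_finset_sum' measurable_snd]
          have hterm : ∀ i,
              (ENNReal.ofReal (W.sZ i j) • ((W.Z i j).μ.map (g i j))).map Prod.snd
              = (ENNReal.ofReal (W.sZ i j) • ((W.Z i j).μ.map (W.ψY i j))).map (EY.ψ j) := by
            intro i
            rw [Measure.map_smul, Measure.map_smul,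
              Measure.map_map measurable_snd (hg i j),
              Measure.map_map ((EY.isom j).continuous.measurable)
                ((W.isomY i j).continuous.measurable)]
            rfl
          simp_rw [hterm]
          rw [← map_finset_sum' ((EY.isom j).continuous.measurable), W.margY j,
            Measure.map_smul]
      _ = EY.tot.μ := EY.pushforward
  have hcoupling : μstar ∈ Couplings EX.tot.μ EY.tot.μ := ⟨hprob, hfst, hsnd⟩
  -- the support set
  set S : Set (EX.tot.carrier × EY.tot.carrier) := ⋃ i, ⋃ j, Set.range (g i j) with hSdef
  have hSm : MeasurableSet S := by
    refine MeasurableSet.iUnion fun i => MeasurableSet.iUnion fun j => ?_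
    exact (isCompact_range (hgc i j)).isClosed.measurableSet
  have hnull : μstar Sᶜ = 0 := by
    have hpre : ∀ i j, g i j ⁻¹' Sᶜ = ∅ := by
      intro i j
      refine Set.eq_empty_of_forall_notMem fun z hz => hz ?_
      exact Set.mem_iUnion.2 ⟨i, Set.mem_iUnion.2 ⟨j, ⟨z, rfl⟩⟩⟩
    simp [hμdef, Measure.finset_sum_apply, Measure.smul_apply, smul_eq_mul,
      Measure.map_apply (hg _ _) hSm.compl, hpre]
  have hae : ∀ᵐ w : (EX.tot.carrier × EY.tot.carrier) × (EX.tot.carrier × EY.tot.carrier)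
      ∂(μstar.prod μstar), w.1 ∈ S ∧ w.2 ∈ S := by
    rw [ae_iff]
    have hsub : {w : (EX.tot.carrier × EY.tot.carrier) ×
        (EX.tot.carrier × EY.tot.carrier) | ¬(w.1 ∈ S ∧ w.2 ∈ S)} ⊆
        (Sᶜ ×ˢ Set.univ) ∪ (Set.univ ×ˢ Sᶜ) := by
      intro w hw
      simp only [Set.mem_setOf_eq, not_and_or] at hw
      rcases hw with hw | hw
      · exact Or.inl ⟨hw, Set.mem_univ _⟩
      · exact Or.inr ⟨Set.mem_univ _, hw⟩
    refine measure_mono_null hsub (measure_union_null ?_ ?_)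
    · rw [Measure.prod_prod, hnull, zero_mul]
    · rw [Measure.prod_prod, hnull, mul_zero]
  -- pointwise vanishing on S × S
  have hkeyX : ∀ i i0 (a : (DX.space i).carrier),
      EX.ψ i a ∈ Set.range (EX.ψ i0) → i = i0 := by
    intro i i0 a ha
    by_contra hne
    exact Set.disjoint_left.mp (EX.disj i i0 hne) ⟨a, rfl⟩ ha
  have hkeyY : ∀ j j0 (a : (DY.space j).carrier),
      EY.ψ j a ∈ Set.range (EY.ψ j0) → j = j0 := by
    intro j j0 a ha
    by_contra hne
    exact Set.disjoint_left.mp (EY.disj j j0 hne) ⟨a, rfl⟩ ha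
  have hzero : ∀ u v : EX.tot.carrier × EY.tot.carrier, u ∈ S → v ∈ S →
      GammaStar EX EY p u.1 u.2 v.1 v.2 = 0 := by
    intro u v hu hv
    simp only [hSdef, Set.mem_iUnion] at hu hv
    obtain ⟨i, j, z, hz⟩ := hu
    obtain ⟨i', j', z', hz'⟩ := hv
    unfold GammaStar
    split_ifs with hcond
    · obtain ⟨⟨i0, hx, hx'⟩, ⟨j0, hy, hy'⟩⟩ := hcond
      have hxz : u.1 = EX.ψ i (W.ψX i j z) := by rw [← hz]
      have hyz : u.2 = EY.ψ j (W.ψY i j z) := by rw [← hz]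
      have hxz' : v.1 = EX.ψ i' (W.ψX i' j' z') := by rw [← hz']
      have hyz' : v.2 = EY.ψ j' (W.ψY i' j' z') := by rw [← hz']
      have hii0 : i = i0 := hkeyX i i0 _ (hxz ▸ hx)
      have hii0' : i' = i0 := hkeyX i' i0 _ (hxz' ▸ hx')
      have hjj0 : j = j0 := hkeyY j j0 _ (hyz ▸ hy)
      have hjj0' : j' = j0 := hkeyY j' j0 _ (hyz' ▸ hy')
      have hii : i = i' := hii0.trans hii0'.symm
      have hjj : j = j' := hjj0.trans hjj0'.symm
      subst hii hjj
      have hdX : dist u.1 v.1 = dist z z' := by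
        rw [hxz, hxz', (EX.isom _).dist_eq, (W.isomX _ _).dist_eq]
      have hdY : dist u.2 v.2 = dist z z' := by
        rw [hyz, hyz', (EY.isom _).dist_eq, (W.isomY _ _).dist_eq]
      rw [hdX, hdY, sub_self, abs_zero, Real.zero_rpow hp0]
    · rfl
  have hint : (∫ w : (EX.tot.carrier × EY.tot.carrier) ×
      (EX.tot.carrier × EY.tot.carrier),
      GammaStar EX EY p w.1.1 w.1.2 w.2.1 w.2.2 ∂(μstar.prod μstar)) = 0 := by
    refine integral_eq_zero_of_ae ?_
    filter_upwards [hae] with w hw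
    exact hzero _ _ hw.1 hw.2
  -- nonnegativity of the loss
  have hΓ : ∀ a b c d, 0 ≤ GammaStar EX EY p a b c d := by
    intro a b c d
    unfold GammaStar
    split_ifs
    · exact Real.rpow_nonneg (abs_nonneg _) p
    · exact le_refl 0
  have hlb : ∀ t ∈ (fun μ : Measure (EX.tot.carrier × EY.tot.carrier) =>
      (1 / 2) * (∫ w : (EX.tot.carrier × EY.tot.carrier) ×
        (EX.tot.carrier × EY.tot.carrier),
        GammaStar EX EY p w.1.1 w.1.2 w.2.1 w.2.2 ∂(μ.prod μ)) ^ (1 / p))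
      '' Couplings EX.tot.μ EY.tot.μ, 0 ≤ t := by
    rintro t ⟨μ, -, rfl⟩
    exact mul_nonneg (by norm_num)
      (Real.rpow_nonneg (integral_nonneg fun w => hΓ _ _ _ _) _)
  have h0mem : (0 : ℝ) ∈ (fun μ : Measure (EX.tot.carrier × EY.tot.carrier) =>
      (1 / 2) * (∫ w : (EX.tot.carrier × EY.tot.carrier) ×
        (EX.tot.carrier × EY.tot.carrier),
        GammaStar EX EY p w.1.1 w.1.2 w.2.1 w.2.2 ∂(μ.prod μ)) ^ (1 / p))
      '' Couplings EX.tot.μ EY.tot.μ := by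
    refine ⟨μstar, hcoupling, ?_⟩
    simp only [hint, Real.zero_rpow (one_div_ne_zero hp0), mul_zero]
  refine ⟨?_, μstar, hcoupling, hint⟩
  unfold JGWwith GWobj
  exact le_antisymm (csInf_le ⟨0, hlb⟩ h0mem) (le_csInf ⟨0, h0mem⟩ hlb)
end

section
/- Let 𝐗 and 𝐘 be distributions of mm-spaces with embeddings (X,(ψ^X_i)_{i∈[k_X]}) and (Y,(ψ^Y_j)_{j∈[k_Y]}), let p ∈ [1,∞), and let μ ∈ M(μ_X, μ_Y) be a coupling with ∬_{(X×Y)×(X×Y)} Γ*_p(x,y,x',y') dμ(x,y) dμ(x',y') = 0. Then for every i ∈ [k_X], j ∈ [k_Y] and every two points (x₁,y₁), (x₂,y₂) in the support of μ with x₁, x₂ ∈ ψ^X_i(X_i) and y₁, y₂ ∈ ψ^Y_j(Y_j), one has d_X(x₁,x₂) = d_Y(y₁,y₂). -/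
open MeasureTheory

/-- The (topological) support of a measure: points all of whose open
neighbourhoods have positive measure. -/
def measureSupport {α : Type} [TopologicalSpace α] [MeasurableSpace α]
    (μ : Measure α) : Set α :=
  {x | ∀ U : Set α, IsOpen U → x ∈ U → 0 < μ U}

open Set

theorem mem_measureSupport_prod {α β : Type} [TopologicalSpace α] [MeasurableSpace α]
    [TopologicalSpace β] [MeasurableSpace β] {μ : Measure α} {ν : Measure β} [SFinite ν]
    {a : α} {b : β} (ha : a ∈ measureSupport μ) (hb : b ∈ measureSupport ν) :
    (a, b) ∈ measureSupport (μ.prod ν) := by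
  intro W hW hab
  obtain ⟨u, v, hu, hv, hau, hbv, huv⟩ := isOpen_prod_iff.mp hW a b hab
  calc 0 < μ u * ν v := ENNReal.mul_pos (ha u hu hau).ne' (hb v hv hbv).ne'
    _ = μ.prod ν (u ×ˢ v) := (Measure.prod_prod u v).symm
    _ ≤ μ.prod ν W := measure_mono huv

theorem eq_zero_of_integral_eq_zero_of_mem_measureSupport {α : Type} [TopologicalSpace α]
    [MeasurableSpace α] {μ : Measure α} {f : α → ℝ} (hf : Continuous f) (hf₀ : 0 ≤ f)
    (hfi : Integrable f μ) (hint : ∫ a, f a ∂μ = 0) {a : α} (ha : a ∈ measureSupport μ) :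
    f a = 0 := by
  have hae : f =ᵐ[μ] 0 := (integral_eq_zero_iff_of_nonneg hf₀ hfi).mp hint
  by_contra hfa
  exact (ha {b | f b ≠ 0} (isOpen_ne_fun hf continuous_const) hfa).ne' (ae_iff.mp hae)

namespace MMEmbedding

variable {D : MMDist} (E : MMEmbedding D)

theorem compl_range_eq_biUnion (i : Fin D.k) :
    (range (E.ψ i))ᶜ = ⋃ i' ∈ ({i}ᶜ : Set (Fin D.k)), range (E.ψ i') := by
  ext z
  obtain ⟨i', hz⟩ := mem_iUnion.mp (E.cover.symm ▸ mem_univ z)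
  simp only [mem_compl_iff, mem_iUnion, mem_singleton_iff, exists_prop]
  constructor
  · exact fun hzi => ⟨i', fun h => hzi (h ▸ hz), hz⟩
  · rintro ⟨i'', hne, hz''⟩ hzi
    exact disjoint_left.mp (E.disj _ _ hne) hz'' hzi

theorem isClosed_range (i : Fin D.k) : IsClosed (range (E.ψ i)) :=
  (isCompact_range (E.isom i).continuous).isClosed

theorem isClopen_range (i : Fin D.k) : IsClopen (range (E.ψ i)) := by
  refine ⟨E.isClosed_range i, ?_⟩
  rw [← compl_compl (range _), E.compl_range_eq_biUnion]
  exact ((toFinite _).isClosed_biUnion fun i' _ => E.isClosed_range i').isOpen_compl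

def sameCluster : Set (E.tot.carrier × E.tot.carrier) :=
  {q | ∃ i, q.1 ∈ range (E.ψ i) ∧ q.2 ∈ range (E.ψ i)}

theorem sameCluster_eq_iUnion : E.sameCluster = ⋃ i, range (E.ψ i) ×ˢ range (E.ψ i) := by
  ext; simp [sameCluster]

theorem isClopen_sameCluster : IsClopen E.sameCluster := by
  rw [sameCluster_eq_iUnion]
  exact isClopen_iUnion_of_finite fun i => (E.isClopen_range i).prod (E.isClopen_range i)

end MMEmbedding

section GammaStar

variable {DX DY : MMDist} (EX : MMEmbedding DX) (EY : MMEmbedding DY) {p : ℝ}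

theorem gammaStar_nonneg (x : EX.tot.carrier) (y : EY.tot.carrier) (x' : EX.tot.carrier)
    (y' : EY.tot.carrier) : 0 ≤ GammaStar EX EY p x y x' y' := by
  unfold GammaStar
  split_ifs
  exacts [Real.rpow_nonneg (abs_nonneg _) p, le_rfl]

theorem continuous_gammaStar (hp : 0 ≤ p) :
    Continuous fun w : (EX.tot.carrier × EY.tot.carrier) × (EX.tot.carrier × EY.tot.carrier) =>
      GammaStar EX EY p w.1.1 w.1.2 w.2.1 w.2.2 := by
  classical
  have hclopen : IsClopen
      {w : (EX.tot.carrier × EY.tot.carrier) × (EX.tot.carrier × EY.tot.carrier) |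
        (w.1.1, w.2.1) ∈ EX.sameCluster ∧ (w.1.2, w.2.2) ∈ EY.sameCluster} :=
    (EX.isClopen_sameCluster.preimage (by fun_prop)).inter
      (EY.isClopen_sameCluster.preimage (by fun_prop))
  exact Continuous.if (fun w hw => (hclopen.frontier_eq.subset hw).elim)
    ((Real.continuous_rpow_const hp).comp (by fun_prop)) continuous_const

theorem integrable_gammaStar (hp : 0 ≤ p) (ν : Measure ((EX.tot.carrier × EY.tot.carrier) ×
      (EX.tot.carrier × EY.tot.carrier))) [IsFiniteMeasure ν] :
    Integrable (fun w => GammaStar EX EY p w.1.1 w.1.2 w.2.1 w.2.2) ν :=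
  (BoundedContinuousFunction.mkOfCompact ⟨_, continuous_gammaStar EX EY hp⟩).integrable ν

end GammaStar

/-- If a coupling `μ ∈ M(μ_X, μ_Y)` has vanishing double
integral of `Γ*_p`, then any two points of its support lying over the same pair
of clusters `(i, j)` are matched isometrically: `d_X(x₁,x₂) = d_Y(y₁,y₂)`. -/
theorem support_of_null_coupling_isometric (DX DY : MMDist)
    (EX : MMEmbedding DX) (EY : MMEmbedding DY) (p : ℝ) (hp : 1 ≤ p)
    (μ : Measure (EX.tot.carrier × EY.tot.carrier))
    (hμ : μ ∈ Couplings EX.tot.μ EY.tot.μ)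
    (hzero : (∫ w : (EX.tot.carrier × EY.tot.carrier) ×
        (EX.tot.carrier × EY.tot.carrier),
      GammaStar EX EY p w.1.1 w.1.2 w.2.1 w.2.2 ∂(μ.prod μ)) = 0)
    (i : Fin DX.k) (j : Fin DY.k)
    (x₁ x₂ : EX.tot.carrier) (y₁ y₂ : EY.tot.carrier)
    (h₁ : (x₁, y₁) ∈ measureSupport μ) (h₂ : (x₂, y₂) ∈ measureSupport μ)
    (hx₁ : x₁ ∈ Set.range (EX.ψ i)) (hx₂ : x₂ ∈ Set.range (EX.ψ i))
    (hy₁ : y₁ ∈ Set.range (EY.ψ j)) (hy₂ : y₂ ∈ Set.range (EY.ψ j)) :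
    dist x₁ x₂ = dist y₁ y₂ := by
  have : IsProbabilityMeasure μ := hμ.1
  have hp₀ : 0 ≤ p := zero_le_one.trans hp
  have hvanish : GammaStar EX EY p x₁ y₁ x₂ y₂ = 0 :=
    eq_zero_of_integral_eq_zero_of_mem_measureSupport (continuous_gammaStar EX EY hp₀)
      (fun w => gammaStar_nonneg EX EY _ _ _ _) (integrable_gammaStar EX EY hp₀ _) hzero
      (mem_measureSupport_prod h₁ h₂)
  rw [GammaStar, if_pos ⟨⟨i, hx₁, hx₂⟩, ⟨j, hy₁, hy₂⟩⟩,
    Real.rpow_eq_zero_iff_of_nonneg (abs_nonneg _)] at hvanish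
  exact sub_eq_zero.mp (abs_eq_zero.mp hvanish.1)
end

section
/- Let n_X, n_Y be positive integers, let d^X, I^X be symmetric real n_X × n_X matrices with d^X ⊗ I^X = d^X (entrywise product), let d^Y, I^Y be symmetric real n_Y × n_Y matrices with d^Y ⊗ I^Y = d^Y, and let μ be any real n_X × n_Y matrix. Then ∑_{i,j∈[n_X]} ∑_{k,l∈[n_Y]} (d^X_{ij} − d^Y_{kl})² · I^X_{ij} · I^Y_{kl} · μ_{ik} · μ_{jl} = ⟨μ, d^{X∧2} μ I^Y − 2 d^X μ d^Y + I^X μ d^{Y∧2}⟩, where ⟨A,B⟩ = ∑_{i,k} A_{ik}B_{ik} is the Frobenius inner product and A^{∧2} denotes the entrywise square of a matrix A. -/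
open Matrix
open scoped Matrix

/-- For symmetric matrices `dX, IX` (of size `nX`) and
`dY, IY` (of size `nY`) with `dX ⊙ IX = dX` and `dY ⊙ IY = dY` (entrywise
products), and any `nX × nY` matrix `μ`,
`∑_{i,j,k,l} (dX i j − dY k l)² (IX i j) (IY k l) (μ i k) (μ j l)`
equals the Frobenius inner product
`⟨μ, dX^{∧2} μ IY − 2 dX μ dY + IX μ dY^{∧2}⟩`. -/
theorem jgw_quadratic_loss_matrix_identity (nX nY : ℕ) (hnX : 0 < nX) (hnY : 0 < nY)
    (dX IX : Matrix (Fin nX) (Fin nX) ℝ) (dY IY : Matrix (Fin nY) (Fin nY) ℝ)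
    (hdX : dX.IsSymm) (hIX : IX.IsSymm) (hdY : dY.IsSymm) (hIY : IY.IsSymm)
    (hXI : dX ⊙ IX = dX) (hYI : dY ⊙ IY = dY)
    (μ : Matrix (Fin nX) (Fin nY) ℝ) :
    ∑ i : Fin nX, ∑ j : Fin nX, ∑ k : Fin nY, ∑ l : Fin nY,
        (dX i j - dY k l) ^ 2 * IX i j * IY k l * μ i k * μ j l =
      ∑ i : Fin nX, ∑ k : Fin nY,
        μ i k * (((dX ⊙ dX) * μ * IY - 2 • (dX * μ * dY) + IX * μ * (dY ⊙ dY) :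
          Matrix (Fin nX) (Fin nY) ℝ)) i k := by
  have hX : ∀ i j, dX i j * IX i j = dX i j := fun i j => congrFun (congrFun hXI i) j
  have hY : ∀ k l, dY k l * IY k l = dY k l := fun k l => congrFun (congrFun hYI k) l
  have key : ∀ (i j : Fin nX) (k l : Fin nY),
      (dX i j - dY k l) ^ 2 * IX i j * IY k l * μ i k * μ j l =
      (dX i j ^ 2 * IY k l - 2 * (dX i j * dY k l) + IX i j * dY k l ^ 2) *
        (μ i k * μ j l) := by
    intro i j k l
    linear_combination (μ i k * μ j l) *
      (((dX i j * IY k l - 2 * IY k l * dY k l) * (hX i j)) +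
       ((dY k l * IX i j - 2 * dX i j) * (hY k l)))
  simp only [key]
  simp only [Matrix.mul_apply, Matrix.sub_apply, Matrix.add_apply, Matrix.smul_apply,
    smul_eq_mul, Matrix.hadamard_apply, Finset.mul_sum, Finset.sum_mul,
    Finset.sum_sub_distrib, Finset.sum_add_distrib, hIY.apply, hdY.apply]
  refine Finset.sum_congr rfl fun i _ => ?_
  rw [Finset.sum_comm]
  refine Finset.sum_congr rfl fun k _ => ?_
  rw [Finset.sum_comm]
  simp only [nsmul_eq_mul, Nat.cast_ofNat, Finset.mul_sum, mul_sub, mul_add,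
    ← Finset.sum_sub_distrib, ← Finset.sum_add_distrib]
  refine Finset.sum_congr rfl fun l _ => Finset.sum_congr rfl fun j _ => ?_
  ring
end
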